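/- arXiv:2106.08086 — 6 statements merged into one kernel-verified Lean document; each statement's English description precedes it below -/
import Mathlib

section
/- Let E_B, E_K, E_R be countable types, X = (X_B, X_K, X_R) a random vector on a probability space with values in E_B × E_K × E_R, Y a real-valued random variable, and X̃ = (X̃_B, X̃_K, X̃_R) a random vector independent of (X, Y) with the same law as X. Let f : E_B × E_K × E_R → ℝ and a loss L : ℝ × ℝ → ℝ be functions such that L(f(X_B, X̃_K, X̃_R), Y) and L(f(X_B, X_K, X̃_R), Y) are integrable. If f is invariant in its K-coordinate on the support of the product of marginals, i.e. f(b, k, r) = f(b, k', r) for all b, k, k', r with P(X_B = b) > 0, P(X_K = k) > 0, P(X_K = k') > 0, P(X_R = r) > 0, then the direct importance DI(K|B; f, f) := E[L(f(X_B, X̃_K, X̃_R), Y)] − E[L(f(X_B, X_K, X̃_R), Y)] equals zero. -/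
open MeasureTheory ProbabilityTheory

lemma ae_pos_atom {Ω E : Type*} [MeasurableSpace Ω] [Countable E]
    [MeasurableSpace E] [MeasurableSingletonClass E]
    (P : Measure Ω) (X : Ω → E) :
    ∀ᵐ ω ∂P, 0 < P (X ⁻¹' {X ω}) := by
  have h0 : P (X ⁻¹' {e | P (X ⁻¹' {e}) = 0}) = 0 := by
    have heq : X ⁻¹' {e | P (X ⁻¹' {e}) = 0}
        = ⋃ e ∈ {e | P (X ⁻¹' {e}) = 0}, X ⁻¹' {e} := by
      ext ω; simp [eq_comm]
    rw [heq]
    exact (measure_biUnion_null_iff (Set.to_countable _)).mpr fun e he => he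
  have : ∀ᵐ ω ∂P, ¬ (P (X ⁻¹' {X ω}) = 0) := by
    rw [ae_iff]
    simpa using h0
  filter_upwards [this] with ω hω
  exact pos_iff_ne_zero.mpr hω

/-- Direct Sensitivity of DI (contrapositive form), non-marginalized prediction function:
if `f` is invariant in its K-coordinate on the support of the product of marginals,
then the direct importance `DI(K | B; f, f)` is zero. -/
theorem dedact_direct_sensitivity_DI
    {Ω : Type*} [MeasurableSpace Ω] (P : Measure Ω) [IsProbabilityMeasure P]
    {EB EK ER : Type*} [Countable EB] [Countable EK] [Countable ER]
    [MeasurableSpace EB] [MeasurableSingletonClass EB]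
    [MeasurableSpace EK] [MeasurableSingletonClass EK]
    [MeasurableSpace ER] [MeasurableSingletonClass ER]
    (XB : Ω → EB) (XK : Ω → EK) (XR : Ω → ER)
    (XB' : Ω → EB) (XK' : Ω → EK) (XR' : Ω → ER)
    (Y : Ω → ℝ)
    (hXB : Measurable XB) (hXK : Measurable XK) (hXR : Measurable XR)
    (hXB' : Measurable XB') (hXK' : Measurable XK') (hXR' : Measurable XR')
    (hY : Measurable Y)
    (hindep : IndepFun (fun ω => (XB' ω, XK' ω, XR' ω))
      (fun ω => (XB ω, XK ω, XR ω, Y ω)) P)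
    (hlaw : P.map (fun ω => (XB' ω, XK' ω, XR' ω))
      = P.map (fun ω => (XB ω, XK ω, XR ω)))
    (f : EB × EK × ER → ℝ) (L : ℝ × ℝ → ℝ)
    (hint1 : Integrable (fun ω => L (f (XB ω, XK' ω, XR' ω), Y ω)) P)
    (hint2 : Integrable (fun ω => L (f (XB ω, XK ω, XR' ω), Y ω)) P)
    (hinv : ∀ (b : EB) (k k' : EK) (r : ER),
      0 < P (XB ⁻¹' {b}) → 0 < P (XK ⁻¹' {k}) → 0 < P (XK ⁻¹' {k'}) →
      0 < P (XR ⁻¹' {r}) → f (b, k, r) = f (b, k', r)) :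
    (∫ ω, L (f (XB ω, XK' ω, XR' ω), Y ω) ∂P)
      - (∫ ω, L (f (XB ω, XK ω, XR' ω), Y ω) ∂P) = 0 := by
  have htrip' : Measurable (fun ω => (XB' ω, XK' ω, XR' ω)) :=
    hXB'.prodMk (hXK'.prodMk hXR')
  have htrip : Measurable (fun ω => (XB ω, XK ω, XR ω)) :=
    hXB.prodMk (hXK.prodMk hXR)
  -- marginal equalities
  have hKmarg : ∀ k : EK, P (XK' ⁻¹' {k}) = P (XK ⁻¹' {k}) := by
    intro k
    have hs : MeasurableSet ((Set.univ : Set EB) ×ˢ ({k} ×ˢ (Set.univ : Set ER))) :=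
      MeasurableSet.univ.prod ((measurableSet_singleton k).prod MeasurableSet.univ)
    have h1 := Measure.map_apply (μ := P) htrip' hs
    have h2 := Measure.map_apply (μ := P) htrip hs
    have e1 : (fun ω => (XB' ω, XK' ω, XR' ω)) ⁻¹'
        ((Set.univ : Set EB) ×ˢ ({k} ×ˢ (Set.univ : Set ER))) = XK' ⁻¹' {k} := by
      ext ω; simp [eq_comm]
    have e2 : (fun ω => (XB ω, XK ω, XR ω)) ⁻¹'
        ((Set.univ : Set EB) ×ˢ ({k} ×ˢ (Set.univ : Set ER))) = XK ⁻¹' {k} := by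
      ext ω; simp [eq_comm]
    rw [e1] at h1; rw [e2] at h2
    rw [← h1, ← h2, hlaw]
  have hRmarg : ∀ r : ER, P (XR' ⁻¹' {r}) = P (XR ⁻¹' {r}) := by
    intro r
    have hs : MeasurableSet ((Set.univ : Set EB) ×ˢ ((Set.univ : Set EK) ×ˢ ({r} : Set ER))) :=
      MeasurableSet.univ.prod (MeasurableSet.univ.prod (measurableSet_singleton r))
    have h1 := Measure.map_apply (μ := P) htrip' hs
    have h2 := Measure.map_apply (μ := P) htrip hs
    have e1 : (fun ω => (XB' ω, XK' ω, XR' ω)) ⁻¹'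
        ((Set.univ : Set EB) ×ˢ ((Set.univ : Set EK) ×ˢ ({r} : Set ER))) = XR' ⁻¹' {r} := by
      ext ω; simp [eq_comm]
    have e2 : (fun ω => (XB ω, XK ω, XR ω)) ⁻¹'
        ((Set.univ : Set EB) ×ˢ ((Set.univ : Set EK) ×ˢ ({r} : Set ER))) = XR ⁻¹' {r} := by
      ext ω; simp [eq_comm]
    rw [e1] at h1; rw [e2] at h2
    rw [← h1, ← h2, hlaw]
  have heq : (fun ω => L (f (XB ω, XK' ω, XR' ω), Y ω))
      =ᵐ[P] (fun ω => L (f (XB ω, XK ω, XR' ω), Y ω)) := by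
    filter_upwards [ae_pos_atom P XB, ae_pos_atom P XK, ae_pos_atom P XK',
      ae_pos_atom P XR'] with ω hB hK hK' hR'
    have hK'2 : 0 < P (XK ⁻¹' {XK' ω}) := (hKmarg (XK' ω)) ▸ hK'
    have hR'2 : 0 < P (XR ⁻¹' {XR' ω}) := (hRmarg (XR' ω)) ▸ hR'
    rw [hinv (XB ω) (XK' ω) (XK ω) (XR' ω) hB hK'2 hK hR'2]
  rw [integral_congr_ae heq, sub_self]
end

section
/- Let Ω be a probability space and let Y, X_C, X_J, X, X̃¹, X̃² be random variables with values in standard Borel spaces F, E_C, E_J, E, E, E respectively. Assume: (i) X̃¹ is conditionally independent of Y given X_C and the conditional distribution of X̃¹ given X_C equals the conditional distribution of X given X_C (almost everywhere, as Markov kernels from E_C to E); (ii) X̃² is conditionally independent of Y given (X_C, X_J) and the conditional distribution of X̃² given (X_C, X_J) equals the conditional distribution of X given (X_C, X_J) (almost everywhere, as Markov kernels from E_C × E_J to E). If Y is conditionally independent of X_J given X_C, then the joint law of (Y, X̃¹) equals the joint law of (Y, X̃²). -/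
/-!
Conditioning on `X_C`, the pair `(X̃¹, Y)` has law `κ_X(c) ⊗ κ_Y(c)`, where `κ_X`, `κ_Y` are the
conditional laws of `X` and `Y` given `X_C`. Integrating `κ_X(X_C)(t)` against a function of `X_C`
is the same as integrating the indicator of `X ∈ t`, so `P(X̃¹ ∈ t, Y ∈ s) = E[1{X ∈ t} κ_Y(X_C)(s)]`.
The same argument given `(X_C, X_J)` gives `P(X̃² ∈ t, Y ∈ s) = E[1{X ∈ t} κ'_Y(X_C, X_J)(s)]`,
and `Y ⫫ X_J | X_C` says exactly that `κ'_Y(X_C, X_J) = κ_Y(X_C)` almost surely.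
-/

open MeasureTheory ProbabilityTheory

open scoped ENNReal

namespace ProbabilityTheory

variable {Ω β γ δ : Type*} {mΩ : MeasurableSpace Ω} {mβ : MeasurableSpace β}
  {mγ : MeasurableSpace γ} {mδ : MeasurableSpace δ} {μ : Measure Ω} [IsFiniteMeasure μ]

theorem lintegral_mul_condDistrib_apply [StandardBorelSpace β] [Nonempty β]
    {X : Ω → β} {k : Ω → γ} (hX : Measurable X) (hk : Measurable k)
    {φ : γ → ℝ≥0∞} (hφ : Measurable φ) {t : Set β} (ht : MeasurableSet t) :
    ∫⁻ c, φ c * condDistrib X k μ c t ∂(μ.map k) = ∫⁻ ω in X ⁻¹' t, φ (k ω) ∂μ := by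
  have hF : Measurable fun p : γ × β => φ p.1 * t.indicator 1 p.2 :=
    (hφ.comp measurable_fst).mul ((measurable_one.indicator ht).comp measurable_snd)
  calc ∫⁻ c, φ c * condDistrib X k μ c t ∂(μ.map k)
      = ∫⁻ p, φ p.1 * t.indicator 1 p.2 ∂(μ.map k ⊗ₘ condDistrib X k μ) := by
        rw [Measure.lintegral_compProd hF]
        refine lintegral_congr fun c => ?_
        dsimp only
        rw [lintegral_const_mul _ (measurable_one.indicator ht), lintegral_indicator_one ht]
    _ = ∫⁻ ω, φ (k ω) * t.indicator 1 (X ω) ∂μ := by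
        rw [compProd_map_condDistrib hX.aemeasurable, lintegral_map hF (hk.prodMk hX)]
    _ = ∫⁻ ω in X ⁻¹' t, φ (k ω) ∂μ := by
        rw [← lintegral_indicator (hX ht)]
        congr with ω
        by_cases h : X ω ∈ t <;> simp [h]

theorem CondIndepFun.measure_inter_preimage_eq_lintegral_condDistrib_mul
    [StandardBorelSpace Ω] [StandardBorelSpace β] [Nonempty β] [StandardBorelSpace δ] [Nonempty δ]
    {f : Ω → β} {g : Ω → δ} {k : Ω → γ} (hf : Measurable f) (hg : Measurable g) (hk : Measurable k)
    (hfg : f ⟂ᵢ[k, hk; μ] g) {t : Set β} {s : Set δ} (ht : MeasurableSet t) (hs : MeasurableSet s) :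
    μ (f ⁻¹' t ∩ g ⁻¹' s)
      = ∫⁻ c, condDistrib f k μ c t * condDistrib g k μ c s ∂(μ.map k) := by
  have h := congrArg (· (Set.univ ×ˢ t ×ˢ s))
    ((condIndepFun_iff_map_prod_eq_prod_condDistrib_prod_condDistrib hf hg hk).mp hfg)
  rw [Measure.map_apply (hk.prodMk (hf.prodMk hg)) (MeasurableSet.univ.prod (ht.prod hs)),
    Measure.bind_apply (MeasurableSet.univ.prod (ht.prod hs)) (by fun_prop)] at h
  simpa [Set.mk_preimage_prod, Kernel.prod_apply_prod] using h

theorem CondIndepFun.measure_inter_preimage_eq_setLIntegral_condDistrib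
    [StandardBorelSpace Ω] [StandardBorelSpace β] [Nonempty β] [StandardBorelSpace δ] [Nonempty δ]
    {f X : Ω → β} {g : Ω → δ} {k : Ω → γ} (hf : Measurable f) (hX : Measurable X)
    (hg : Measurable g) (hk : Measurable k) (hfg : f ⟂ᵢ[k, hk; μ] g)
    (hfX : condDistrib f k μ =ᵐ[μ.map k] condDistrib X k μ)
    {t : Set β} {s : Set δ} (ht : MeasurableSet t) (hs : MeasurableSet s) :
    μ (f ⁻¹' t ∩ g ⁻¹' s) = ∫⁻ ω in X ⁻¹' t, condDistrib g k μ (k ω) s ∂μ := by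
  rw [hfg.measure_inter_preimage_eq_lintegral_condDistrib_mul hf hg hk ht hs,
    ← lintegral_mul_condDistrib_apply hX hk (Kernel.measurable_coe _ hs) ht]
  refine lintegral_congr_ae ?_
  filter_upwards [hfX] with c hc
  rw [hc, mul_comm]

theorem CondIndepFun.condDistrib_prodMk_apply_ae_eq
    [StandardBorelSpace Ω] [StandardBorelSpace β] [Nonempty β] [StandardBorelSpace δ] [Nonempty δ]
    {f : Ω → β} {g : Ω → δ} {k : Ω → γ} (hf : Measurable f) (hg : Measurable g)
    (hk : Measurable k) (hfg : f ⟂ᵢ[k, hk; μ] g) :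
    ∀ᵐ ω ∂μ, condDistrib f (fun ω => (k ω, g ω)) μ (k ω, g ω) = condDistrib f k μ (k ω) :=
  ae_of_ae_map (hk.prodMk hg).aemeasurable
    ((condIndepFun_iff_condDistrib_prod_ae_eq_prodMkRight hf hg hk).mp hfg.symm)

end ProbabilityTheory

theorem dedact_interventional_distributions_coincide_general
    {Ω : Type*} [MeasurableSpace Ω] [StandardBorelSpace Ω]
    (P : Measure Ω) [IsProbabilityMeasure P]
    {F EC EJ E : Type*}
    [MeasurableSpace F] [StandardBorelSpace F] [Nonempty F]
    [MeasurableSpace EC]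
    [MeasurableSpace EJ] [StandardBorelSpace EJ] [Nonempty EJ]
    [MeasurableSpace E] [StandardBorelSpace E] [Nonempty E]
    (Y : Ω → F) (XC : Ω → EC) (XJ : Ω → EJ) (X Xt1 Xt2 : Ω → E)
    (hY : Measurable Y) (hXC : Measurable XC) (hXJ : Measurable XJ)
    (hX : Measurable X) (hXt1 : Measurable Xt1) (hXt2 : Measurable Xt2)
    -- (i) `X̃¹ ⫫ Y | X_C` and `P(X̃¹ | X_C) = P(X | X_C)`
    (hci1 : CondIndepFun (MeasurableSpace.comap XC inferInstance) hXC.comap_le Xt1 Y P)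
    (hker1 : ∀ᵐ c ∂(P.map XC), condDistrib Xt1 XC P c = condDistrib X XC P c)
    -- (ii) `X̃² ⫫ Y | (X_C, X_J)` and `P(X̃² | X_C, X_J) = P(X | X_C, X_J)`
    (hci2 : CondIndepFun (MeasurableSpace.comap (fun ω => (XC ω, XJ ω)) inferInstance)
      (Measurable.comap_le (hXC.prodMk hXJ)) Xt2 Y P)
    (hker2 : ∀ᵐ p ∂(P.map (fun ω => (XC ω, XJ ω))),
      condDistrib Xt2 (fun ω => (XC ω, XJ ω)) P p
        = condDistrib X (fun ω => (XC ω, XJ ω)) P p)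
    -- `Y ⫫ X_J | X_C`
    (hYJ : CondIndepFun (MeasurableSpace.comap XC inferInstance) hXC.comap_le Y XJ P) :
    P.map (fun ω => (Y ω, Xt1 ω)) = P.map (fun ω => (Y ω, Xt2 ω)) := by
  have hκY := hYJ.condDistrib_prodMk_apply_ae_eq hY hXJ hXC
  refine Measure.ext_prod fun {s t} hs ht => ?_
  rw [Measure.map_apply (hY.prodMk hXt1) (hs.prod ht),
    Measure.map_apply (hY.prodMk hXt2) (hs.prod ht), Set.mk_preimage_prod,
    Set.mk_preimage_prod, Set.inter_comm, Set.inter_comm (Y ⁻¹' s)]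
  calc P (Xt1 ⁻¹' t ∩ Y ⁻¹' s)
      = ∫⁻ ω in X ⁻¹' t, condDistrib Y XC P (XC ω) s ∂P :=
        hci1.measure_inter_preimage_eq_setLIntegral_condDistrib hXt1 hX hY hXC hker1 ht hs
    _ = ∫⁻ ω in X ⁻¹' t, condDistrib Y (fun ω => (XC ω, XJ ω)) P (XC ω, XJ ω) s ∂P := by
        refine setLIntegral_congr_fun_ae (hX ht) ?_
        filter_upwards [hκY] with ω hω _
        rw [hω]
    _ = P (Xt2 ⁻¹' t ∩ Y ⁻¹' s) :=
        (hci2.measure_inter_preimage_eq_setLIntegral_condDistrib hXt2 hX hY (hXC.prodMk hXJ)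
          hker2 ht hs).symm

/-- Distributional identity in the proof of Associative Sensitivity of AI (Case 1):
if `X̃¹` is a conditionally resampled version of `X` given `X_C`, `X̃²` is a conditionally
resampled version of `X` given `(X_C, X_J)`, and `Y ⫫ X_J | X_C`, then
`P(Y, X̃¹) = P(Y, X̃²)`. -/
theorem dedact_interventional_distributions_coincide
    {Ω : Type*} [MeasurableSpace Ω] [StandardBorelSpace Ω] [Nonempty Ω]
    (P : Measure Ω) [IsProbabilityMeasure P]
    {F EC EJ E : Type*}
    [MeasurableSpace F] [StandardBorelSpace F] [Nonempty F]
    [MeasurableSpace EC] [StandardBorelSpace EC] [Nonempty EC]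
    [MeasurableSpace EJ] [StandardBorelSpace EJ] [Nonempty EJ]
    [MeasurableSpace E] [StandardBorelSpace E] [Nonempty E]
    (Y : Ω → F) (XC : Ω → EC) (XJ : Ω → EJ) (X Xt1 Xt2 : Ω → E)
    (hY : Measurable Y) (hXC : Measurable XC) (hXJ : Measurable XJ)
    (hX : Measurable X) (hXt1 : Measurable Xt1) (hXt2 : Measurable Xt2)
    -- (i) `X̃¹ ⫫ Y | X_C` and `P(X̃¹ | X_C) = P(X | X_C)`
    (hci1 : CondIndepFun (MeasurableSpace.comap XC inferInstance) hXC.comap_le Xt1 Y P)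
    (hker1 : ∀ᵐ c ∂(P.map XC), condDistrib Xt1 XC P c = condDistrib X XC P c)
    -- (ii) `X̃² ⫫ Y | (X_C, X_J)` and `P(X̃² | X_C, X_J) = P(X | X_C, X_J)`
    (hci2 : CondIndepFun (MeasurableSpace.comap (fun ω => (XC ω, XJ ω)) inferInstance)
      (Measurable.comap_le (hXC.prodMk hXJ)) Xt2 Y P)
    (hker2 : ∀ᵐ p ∂(P.map (fun ω => (XC ω, XJ ω))),
      condDistrib Xt2 (fun ω => (XC ω, XJ ω)) P p
        = condDistrib X (fun ω => (XC ω, XJ ω)) P p)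
    -- `Y ⫫ X_J | X_C`
    (hYJ : CondIndepFun (MeasurableSpace.comap XC inferInstance) hXC.comap_le Y XJ P) :
    P.map (fun ω => (Y ω, Xt1 ω)) = P.map (fun ω => (Y ω, Xt2 ω)) :=
  dedact_interventional_distributions_coincide_general P Y XC XJ X Xt1 Xt2 hY hXC hXJ hX hXt1 hXt2
    hci1 hker1 hci2 hker2 hYJ
end

section
/- Let Ω be a probability space and let Y, X_C, X_J, X, X̃¹, X̃² be random variables with values in standard Borel spaces F, E_C, E_J, E, E, E respectively, satisfying: (i) X̃¹ is conditionally independent of Y given X_C and the conditional distribution of X̃¹ given X_C equals the conditional distribution of X given X_C (as Markov kernels, almost everywhere); (ii) X̃² is conditionally independent of Y given (X_C, X_J) and the conditional distribution of X̃² given (X_C, X_J) equals the conditional distribution of X given (X_C, X_J). Let f : E → ℝ be measurable and L : F × ℝ → ℝ be measurable with L(Y, f(X̃¹)) and L(Y, f(X̃²)) integrable, and define the associative importance AI(X_J | X_C; f, f) := E[L(Y, f(X̃¹))] − E[L(Y, f(X̃²))]. If AI(X_J | X_C; f, f) ≠ 0, then Y is not conditionally independent of X_J given X_C. -/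
open MeasureTheory ProbabilityTheory
open scoped ENNReal

/-!
If `Y ⫫ X_J | X_C`, the conditional law of `Y` given `(X_C, X_J)` is its conditional law given `X_C`
alone. For either resample `X̃` (conditioning on `W = X_C` or `W = (X_C, X_J)`), conditional
independence and the kernel identity give
`P(X̃ ∈ t, Y ∈ s) = E[P(X ∈ t | W) · P(Y ∈ s | X_C)] = E[1{X ∈ t} · P(Y ∈ s | X_C)]`,
the last step because the second factor is `W`-measurable. Hence `(X̃¹, Y)` and `(X̃², Y)` have the
same law and the two expected losses agree.
-/

namespace ProbabilityTheory

variable {Ω γ α β : Type*} {mΩ : MeasurableSpace Ω} {mγ : MeasurableSpace γ}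
  [MeasurableSpace α] [StandardBorelSpace α] [Nonempty α]
  [MeasurableSpace β] [StandardBorelSpace β] [Nonempty β]
  {μ : Measure Ω} [IsFiniteMeasure μ] {W : Ω → γ}

lemma lintegral_condDistrib_apply_mul {X : Ω → α} (hW : Measurable W) (hX : Measurable X)
    {g : γ → ℝ≥0∞} (hg : Measurable g) {t : Set α} (ht : MeasurableSet t) :
    ∫⁻ w, condDistrib X W μ w t * g w ∂μ.map W = ∫⁻ ω in X ⁻¹' t, g (W ω) ∂μ := by
  calc ∫⁻ w, condDistrib X W μ w t * g w ∂μ.map W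
      = ∫⁻ p, t.indicator 1 p.2 * g p.1 ∂(μ.map W ⊗ₘ condDistrib X W μ) := by
        rw [Measure.lintegral_compProd (by fun_prop)]
        congr with w
        dsimp only
        rw [lintegral_mul_const _ (measurable_one.indicator ht), lintegral_indicator_one ht]
    _ = ∫⁻ ω, t.indicator 1 (X ω) * g (W ω) ∂μ := by
        rw [compProd_map_condDistrib hX.aemeasurable, lintegral_map (by fun_prop) (by fun_prop)]
    _ = ∫⁻ ω in X ⁻¹' t, g (W ω) ∂μ := by
        rw [← lintegral_indicator (hX ht)]
        congr with ω
        by_cases h : X ω ∈ t <;> simp [h]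

variable [StandardBorelSpace Ω]

lemma map_prodMk_apply_prod_of_condIndepFun {U : Ω → α} {V : Ω → β} (hW : Measurable W)
    (hU : Measurable U) (hV : Measurable V) (hUV : U ⟂ᵢ[W, hW; μ] V)
    {t : Set α} {s : Set β} (ht : MeasurableSet t) (hs : MeasurableSet s) :
    μ.map (fun ω ↦ (U ω, V ω)) (t ×ˢ s)
      = ∫⁻ w, condDistrib U W μ w t * condDistrib V W μ w s ∂μ.map W := by
  have hlaw := (condIndepFun_iff_map_prod_eq_prod_condDistrib_prod_condDistrib hU hV hW).mp hUV
  calc μ.map (fun ω ↦ (U ω, V ω)) (t ×ˢ s)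
      = μ.map (fun ω ↦ (W ω, U ω, V ω)) (Set.univ ×ˢ t ×ˢ s) := by
        rw [Measure.map_apply (by fun_prop) (ht.prod hs),
          Measure.map_apply (by fun_prop) (MeasurableSet.univ.prod (ht.prod hs))]
        simp [Set.mk_preimage_prod]
    _ = _ := by
        rw [hlaw, Measure.bind_apply (MeasurableSet.univ.prod (ht.prod hs)) (by fun_prop)]
        simp [Kernel.prod_apply_prod]

lemma map_prodMk_apply_prod_eq_setLIntegral {Xt X : Ω → α} {Y : Ω → β} (hW : Measurable W)
    (hXt : Measurable Xt) (hX : Measurable X) (hY : Measurable Y) (hXtY : Xt ⟂ᵢ[W, hW; μ] Y)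
    (hXt_law : ∀ᵐ w ∂μ.map W, condDistrib Xt W μ w = condDistrib X W μ w)
    {t : Set α} {s : Set β} (ht : MeasurableSet t) (hs : MeasurableSet s)
    {g : γ → ℝ≥0∞} (hg : Measurable g) (hY_law : ∀ᵐ w ∂μ.map W, condDistrib Y W μ w s = g w) :
    μ.map (fun ω ↦ (Xt ω, Y ω)) (t ×ˢ s) = ∫⁻ ω in X ⁻¹' t, g (W ω) ∂μ := by
  rw [map_prodMk_apply_prod_of_condIndepFun hW hXt hY hXtY ht hs,
    ← lintegral_condDistrib_apply_mul hW hX hg ht]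
  refine lintegral_congr_ae ?_
  filter_upwards [hXt_law, hY_law] with w hXw hYw
  rw [hXw, hYw]

end ProbabilityTheory

theorem dedact_associative_sensitivity_AI_general
    {Ω : Type*} [MeasurableSpace Ω] [StandardBorelSpace Ω]
    (P : Measure Ω) [IsProbabilityMeasure P]
    {F EC EJ E : Type*}
    [MeasurableSpace F] [StandardBorelSpace F] [Nonempty F]
    [MeasurableSpace EC]
    [MeasurableSpace EJ] [StandardBorelSpace EJ] [Nonempty EJ]
    [MeasurableSpace E] [StandardBorelSpace E] [Nonempty E]
    (Y : Ω → F) (XC : Ω → EC) (XJ : Ω → EJ) (X Xt1 Xt2 : Ω → E)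
    (hY : Measurable Y) (hXC : Measurable XC) (hXJ : Measurable XJ)
    (hX : Measurable X) (hXt1 : Measurable Xt1) (hXt2 : Measurable Xt2)
    -- (i) `X̃¹ ⫫ Y | X_C` and `P(X̃¹ | X_C) = P(X | X_C)`
    (hci1 : CondIndepFun (MeasurableSpace.comap XC inferInstance) hXC.comap_le Xt1 Y P)
    (hker1 : ∀ᵐ c ∂(P.map XC), condDistrib Xt1 XC P c = condDistrib X XC P c)
    -- (ii) `X̃² ⫫ Y | (X_C, X_J)` and `P(X̃² | X_C, X_J) = P(X | X_C, X_J)`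
    (hci2 : CondIndepFun (MeasurableSpace.comap (fun ω => (XC ω, XJ ω)) inferInstance)
      (Measurable.comap_le (hXC.prodMk hXJ)) Xt2 Y P)
    (hker2 : ∀ᵐ p ∂(P.map (fun ω => (XC ω, XJ ω))),
      condDistrib Xt2 (fun ω => (XC ω, XJ ω)) P p
        = condDistrib X (fun ω => (XC ω, XJ ω)) P p)
    (f : E → ℝ) (hf : Measurable f)
    (L : F × ℝ → ℝ) (hL : Measurable L)
    -- nonzero associative importance `AI(X_J | X_C; f, f)`
    (hAI : (∫ ω, L (Y ω, f (Xt1 ω)) ∂P) - (∫ ω, L (Y ω, f (Xt2 ω)) ∂P) ≠ 0) :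
    ¬ CondIndepFun (MeasurableSpace.comap XC inferInstance) hXC.comap_le Y XJ P := by
  intro hYXJ
  have hXCJ : Measurable fun ω ↦ (XC ω, XJ ω) := hXC.prodMk hXJ
  have hY_law := (condIndepFun_iff_condDistrib_prod_ae_eq_prodMkRight hY hXJ hXC).mp hYXJ.symm
  have hlaw : IdentDistrib (fun ω ↦ (Xt1 ω, Y ω)) (fun ω ↦ (Xt2 ω, Y ω)) P P := by
    refine ⟨by fun_prop, by fun_prop, Measure.ext_prod fun {t s} ht hs ↦ ?_⟩
    have hg := (condDistrib Y XC P).measurable_coe hs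
    have hY_law_s : ∀ᵐ z ∂P.map (fun ω ↦ (XC ω, XJ ω)),
        condDistrib Y (fun ω ↦ (XC ω, XJ ω)) P z s = condDistrib Y XC P z.1 s := by
      filter_upwards [hY_law] with z hz
      rw [hz, Kernel.prodMkRight_apply]
    rw [map_prodMk_apply_prod_eq_setLIntegral hXC hXt1 hX hY hci1 hker1 ht hs hg
        (ae_of_all _ fun _ ↦ rfl),
      map_prodMk_apply_prod_eq_setLIntegral hXCJ hXt2 hX hY hci2 hker2 ht hs
        (hg.comp measurable_fst) hY_law_s]
    rfl
  have hloss := (hlaw.comp (u := fun p : E × F ↦ L (p.2, f p.1)) (by fun_prop)).integral_eq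
  exact hAI (sub_eq_zero.mpr hloss)

/-- Associative Sensitivity of AI (Proposition 2, non-marginalized prediction function):
nonzero associative importance `AI(X_J | X_C; f, f)` implies that `Y` is conditionally
dependent on `X_J` given `X_C`. -/
theorem dedact_associative_sensitivity_AI
    {Ω : Type*} [MeasurableSpace Ω] [StandardBorelSpace Ω] [Nonempty Ω]
    (P : Measure Ω) [IsProbabilityMeasure P]
    {F EC EJ E : Type*}
    [MeasurableSpace F] [StandardBorelSpace F] [Nonempty F]
    [MeasurableSpace EC] [StandardBorelSpace EC] [Nonempty EC]
    [MeasurableSpace EJ] [StandardBorelSpace EJ] [Nonempty EJ]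
    [MeasurableSpace E] [StandardBorelSpace E] [Nonempty E]
    (Y : Ω → F) (XC : Ω → EC) (XJ : Ω → EJ) (X Xt1 Xt2 : Ω → E)
    (hY : Measurable Y) (hXC : Measurable XC) (hXJ : Measurable XJ)
    (hX : Measurable X) (hXt1 : Measurable Xt1) (hXt2 : Measurable Xt2)
    -- (i) `X̃¹ ⫫ Y | X_C` and `P(X̃¹ | X_C) = P(X | X_C)`
    (hci1 : CondIndepFun (MeasurableSpace.comap XC inferInstance) hXC.comap_le Xt1 Y P)
    (hker1 : ∀ᵐ c ∂(P.map XC), condDistrib Xt1 XC P c = condDistrib X XC P c)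
    -- (ii) `X̃² ⫫ Y | (X_C, X_J)` and `P(X̃² | X_C, X_J) = P(X | X_C, X_J)`
    (hci2 : CondIndepFun (MeasurableSpace.comap (fun ω => (XC ω, XJ ω)) inferInstance)
      (Measurable.comap_le (hXC.prodMk hXJ)) Xt2 Y P)
    (hker2 : ∀ᵐ p ∂(P.map (fun ω => (XC ω, XJ ω))),
      condDistrib Xt2 (fun ω => (XC ω, XJ ω)) P p
        = condDistrib X (fun ω => (XC ω, XJ ω)) P p)
    (f : E → ℝ) (hf : Measurable f)
    (L : F × ℝ → ℝ) (hL : Measurable L)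
    (hint1 : Integrable (fun ω => L (Y ω, f (Xt1 ω))) P)
    (hint2 : Integrable (fun ω => L (Y ω, f (Xt2 ω))) P)
    -- nonzero associative importance `AI(X_J | X_C; f, f)`
    (hAI : (∫ ω, L (Y ω, f (Xt1 ω)) ∂P) - (∫ ω, L (Y ω, f (Xt2 ω)) ∂P) ≠ 0) :
    ¬ CondIndepFun (MeasurableSpace.comap XC inferInstance) hXC.comap_le Y XJ P :=
  dedact_associative_sensitivity_AI_general P Y XC XJ X Xt1 Xt2 hY hXC hXJ hX hXt1 hXt2 hci1 hker1
    hci2 hker2 f hf L hL hAI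
end

section
/- Let (Ω, 𝔉, P) be a probability space, Y a square-integrable real-valued random variable, and X_C, X_J random variables with values in measurable spaces (with a standard Borel condition as required for conditional independence). Define the conditional variance given a sub-σ-algebra m as Var(Y | m) := E[(Y − E[Y | m])² | m]. If Y is conditionally independent of X_J given X_C, then E[Var(Y | σ(X_C, X_J))] = E[Var(Y | σ(X_C))]. -/
/-!
Conditional independence of `Y` and `X_J` given `X_C` implies
`E[Y | σ(X_C, X_J)] = E[Y | σ(X_C)]` a.s.: both sides have the same integral over every rectangle
`{X_C ∈ A} ∩ {X_J ∈ B}`, first for indicators of `Y`-events (where this is exactly the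
factorisation `P[Y ∈ S, X_J ∈ B | X_C] = P[Y ∈ S | X_C] P[X_J ∈ B | X_C]`), then for integrable
`Y` by an `L¹` density argument, and rectangles form a π-system generating `σ(X_C, X_J)`.
The two conditional variances therefore have the same integrand `(Y - E[Y | ·])²` a.s., and the
tower property turns each expected conditional variance into the integral of that integrand.
-/

open MeasureTheory ProbabilityTheory MeasurableSpace

section PiSystem

variable {Ω E : Type*} [NormedAddCommGroup E] [NormedSpace ℝ E]
  {m m₀ : MeasurableSpace Ω} {μ : Measure Ω} {f g : Ω → E}

lemma setIntegral_eq_of_isPiSystem (hm : m ≤ m₀) {S : Set (Set Ω)}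
    (h_gen : m = generateFrom S) (hS : IsPiSystem S) (hf : Integrable f μ) (hg : Integrable g μ)
    (h_univ : ∫ x, f x ∂μ = ∫ x, g x ∂μ) (h_basic : ∀ s ∈ S, ∫ x in s, f x ∂μ = ∫ x in s, g x ∂μ)
    {s : Set Ω} (hs : MeasurableSet[m] s) :
    ∫ x in s, f x ∂μ = ∫ x in s, g x ∂μ := by
  induction s, hs using induction_on_inter h_gen hS with
  | empty => simp
  | basic s hs => exact h_basic s hs
  | compl s hs h_eq =>
    have hf_split := integral_add_compl (hm s hs) hf
    have hg_split := integral_add_compl (hm s hs) hg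
    rw [h_eq] at hf_split
    rw [← h_univ, ← hf_split] at hg_split
    exact (add_left_cancel hg_split).symm
  | iUnion t ht_disj ht h_eq =>
    have hf_sum := hasSum_integral_iUnion (fun i ↦ hm _ (ht i)) ht_disj hf.integrableOn
    have hg_sum := hasSum_integral_iUnion (fun i ↦ hm _ (ht i)) ht_disj hg.integrableOn
    simp_rw [h_eq] at hf_sum
    exact hf_sum.unique hg_sum

end PiSystem

lemma IsPiSystem.image2_inter {Ω : Type*} {C D : Set (Set Ω)} (hC : IsPiSystem C)
    (hD : IsPiSystem D) : IsPiSystem (Set.image2 (· ∩ ·) C D) := by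
  rintro _ ⟨s₁, hs₁, t₁, ht₁, rfl⟩ _ ⟨s₂, hs₂, t₂, ht₂, rfl⟩ h_ne
  have h_eq : s₁ ∩ t₁ ∩ (s₂ ∩ t₂) = s₁ ∩ s₂ ∩ (t₁ ∩ t₂) := Set.inter_inter_inter_comm _ _ _ _
  rw [h_eq] at h_ne ⊢
  exact Set.mem_image2_of_mem (hC _ hs₁ _ hs₂ (h_ne.mono Set.inter_subset_left))
    (hD _ ht₁ _ ht₂ (h_ne.mono Set.inter_subset_right))

lemma MeasurableSpace.sup_eq_generateFrom_inter {Ω : Type*} (m₁ m₂ : MeasurableSpace Ω) :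
    m₁ ⊔ m₂ = generateFrom
      (Set.image2 (· ∩ ·) {s | MeasurableSet[m₁] s} {t | MeasurableSet[m₂] t}) := by
  refine le_antisymm (sup_le ?_ ?_) (generateFrom_le ?_)
  · exact fun s hs ↦ measurableSet_generateFrom ⟨s, hs, Set.univ, .univ, Set.inter_univ s⟩
  · exact fun t ht ↦ measurableSet_generateFrom ⟨Set.univ, .univ, t, ht, Set.univ_inter t⟩
  · rintro _ ⟨s, hs, t, ht, rfl⟩
    exact (le_sup_left (b := m₂) s hs).inter (le_sup_right (a := m₁) t ht)

section ContinuousCondExp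

variable {Ω E : Type*} [NormedAddCommGroup E] [NormedSpace ℝ E] [CompleteSpace E]
  {m m₀ : MeasurableSpace Ω} {μ : Measure Ω}

lemma continuous_setIntegral_condExp (hm : m ≤ m₀) [SigmaFinite (μ.trim hm)] (s : Set Ω) :
    Continuous fun f : Lp E 1 μ ↦ ∫ x in s, (μ[f | m]) x ∂μ := by
  have h_eq : (fun f : Lp E 1 μ ↦ ∫ x in s, (μ[f | m]) x ∂μ)
      = fun f ↦ ∫ x in s, condExpL1CLM E hm μ f x ∂μ := by
    funext f
    refine integral_congr_ae (ae_restrict_of_ae ?_)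
    have h := condExp_ae_eq_condExpL1CLM hm (L1.integrable_coeFn f)
    rwa [Integrable.toL1_coeFn] at h
  rw [h_eq]
  exact (continuous_setIntegral s).comp (condExpL1CLM E hm μ).continuous

end ContinuousCondExp

section CondIndep

variable {Ω : Type*} {m' m₁ m₂ mΩ : MeasurableSpace Ω} [StandardBorelSpace Ω]
  {μ : Measure Ω} [IsFiniteMeasure μ] {hm' : m' ≤ mΩ} {a b : Set Ω} {f : Ω → ℝ}

lemma setIntegral_condExp_indicator_inter_of_condIndep (hm₁ : m₁ ≤ mΩ) (hm₂ : m₂ ≤ mΩ)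
    (hind : CondIndep m' m₁ m₂ hm' μ) {s : Set Ω} (hs : MeasurableSet[m₁] s)
    (ha : MeasurableSet[m'] a) (hb : MeasurableSet[m₂] b) :
    ∫ x in a ∩ b, (μ⟦s | m'⟧) x ∂μ = ∫ x in a ∩ b, s.indicator (fun _ ↦ (1 : ℝ)) x ∂μ := by
  have hb₀ : MeasurableSet b := hm₂ b hb
  have h_mul : b.indicator (μ⟦s | m'⟧) = μ⟦s | m'⟧ * b.indicator (fun _ ↦ (1 : ℝ)) := by
    ext x; by_cases hx : x ∈ b <;> simp [hx]
  have h_int : Integrable (μ⟦s | m'⟧ * b.indicator (fun _ ↦ (1 : ℝ))) μ :=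
    h_mul ▸ integrable_condExp.indicator hb₀
  have h_pull := condExp_mul_of_stronglyMeasurable_left stronglyMeasurable_condExp h_int
    ((integrable_const (1 : ℝ)).indicator hb₀)
  have h_fac := (condIndep_iff m' m₁ m₂ hm' hm₁ hm₂ μ).mp hind s b hs hb
  calc ∫ x in a ∩ b, (μ⟦s | m'⟧) x ∂μ
      = ∫ x in a, (μ⟦s | m'⟧ * b.indicator (fun _ ↦ (1 : ℝ))) x ∂μ := by
        rw [← h_mul, setIntegral_indicator hb₀]
    _ = ∫ x in a, (μ[μ⟦s | m'⟧ * b.indicator (fun _ ↦ (1 : ℝ)) | m']) x ∂μ :=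
        (setIntegral_condExp hm' h_int ha).symm
    _ = ∫ x in a, (μ⟦s ∩ b | m'⟧) x ∂μ :=
        setIntegral_congr_ae (hm' a ha) <| by
          filter_upwards [h_pull, h_fac] with x h₁ h₂ _
          rw [h₁, h₂]
    _ = ∫ x in a, (s ∩ b).indicator (fun _ ↦ (1 : ℝ)) x ∂μ :=
        setIntegral_condExp hm' ((integrable_const _).indicator ((hm₁ s hs).inter hb₀)) ha
    _ = ∫ x in a ∩ b, s.indicator (fun _ ↦ (1 : ℝ)) x ∂μ := by
        rw [Set.inter_comm s b, ← Set.indicator_indicator, setIntegral_indicator hb₀]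

lemma setIntegral_condExp_inter_of_condIndep (hm₁ : m₁ ≤ mΩ) (hm₂ : m₂ ≤ mΩ)
    (hind : CondIndep m' m₁ m₂ hm' μ) (hf : StronglyMeasurable[m₁] f) (hf_int : Integrable f μ)
    (ha : MeasurableSet[m'] a) (hb : MeasurableSet[m₂] b) :
    ∫ x in a ∩ b, (μ[f | m']) x ∂μ = ∫ x in a ∩ b, f x ∂μ := by
  have hab : MeasurableSet (a ∩ b) := (hm' a ha).inter (hm₂ b hb)
  rw [← memLp_one_iff_integrable] at hf_int
  refine MemLp.induction_stronglyMeasurable hm₁ ENNReal.one_ne_top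
    (fun g ↦ ∫ x in a ∩ b, (μ[g | m']) x ∂μ = ∫ x in a ∩ b, g x ∂μ) ?_ ?_ ?_ ?_
    hf_int hf.aestronglyMeasurable
  · intro c s hs _
    have h_smul : s.indicator (fun _ ↦ c) = c • s.indicator (fun _ ↦ (1 : ℝ)) := by
      ext x; by_cases hx : x ∈ s <;> simp [hx]
    rw [h_smul, setIntegral_congr_ae hab ((condExp_smul c _ m').mono fun x hx _ ↦ hx)]
    simp only [Pi.smul_apply, integral_smul]
    rw [setIntegral_condExp_indicator_inter_of_condIndep hm₁ hm₂ hind hs ha hb]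
  · intro g h _ hg hh _ _ hg_eq hh_eq
    rw [memLp_one_iff_integrable] at hg hh
    rw [setIntegral_congr_ae hab ((condExp_add hg hh m').mono fun x hx _ ↦ hx),
      integral_add' integrable_condExp.integrableOn integrable_condExp.integrableOn,
      integral_add' hg.integrableOn hh.integrableOn, hg_eq, hh_eq]
  · exact isClosed_eq ((continuous_setIntegral_condExp hm' _).comp continuous_subtype_val)
      ((continuous_setIntegral _).comp continuous_subtype_val)
  · intro g h hgh _ hg_eq
    rwa [setIntegral_congr_ae hab ((condExp_congr_ae hgh).mono fun x hx _ ↦ hx.symm),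
      setIntegral_congr_ae hab (hgh.mono fun x hx _ ↦ hx.symm)]

lemma condExp_sup_ae_eq_of_condIndep (hm₁ : m₁ ≤ mΩ) (hm₂ : m₂ ≤ mΩ)
    (hind : CondIndep m' m₁ m₂ hm' μ) (hf : StronglyMeasurable[m₁] f) (hf_int : Integrable f μ) :
    μ[f | m' ⊔ m₂] =ᵐ[μ] μ[f | m'] := by
  refine (ae_eq_condExp_of_forall_setIntegral_eq (sup_le hm' hm₂) hf_int
    (fun _ _ _ ↦ integrable_condExp.integrableOn) (fun s hs _ ↦ ?_)
    (stronglyMeasurable_condExp.mono (le_sup_left : m' ≤ m' ⊔ m₂)).aestronglyMeasurable).symm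
  refine setIntegral_eq_of_isPiSystem (sup_le hm' hm₂) (sup_eq_generateFrom_inter m' m₂)
    ((@isPiSystem_measurableSet Ω m').image2_inter (@isPiSystem_measurableSet Ω m₂))
    integrable_condExp hf_int (integral_condExp hm') ?_ hs
  rintro _ ⟨a, ha, b, hb, rfl⟩
  exact setIntegral_condExp_inter_of_condIndep hm₁ hm₂ hind hf hf_int ha hb

end CondIndep

theorem dedact_expected_conditional_variance_general
    {Ω : Type*} [MeasurableSpace Ω] [StandardBorelSpace Ω]
    (P : Measure Ω) [IsProbabilityMeasure P]
    {EC EJ : Type*} [MeasurableSpace EC] [MeasurableSpace EJ]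
    (Y : Ω → ℝ) (XC : Ω → EC) (XJ : Ω → EJ)
    (hY : Measurable Y) (hY2 : MemLp Y 2 P)
    (hXC : Measurable XC) (hXJ : Measurable XJ)
    (hYJ : CondIndepFun (MeasurableSpace.comap XC inferInstance) hXC.comap_le Y XJ P) :
    (∫ ω, (P[fun ω' =>
        (Y ω' - (P[Y | MeasurableSpace.comap (fun ω'' => (XC ω'', XJ ω'')) inferInstance]) ω') ^ 2
      | MeasurableSpace.comap (fun ω'' => (XC ω'', XJ ω'')) inferInstance]) ω ∂P)
    = ∫ ω, (P[fun ω' =>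
        (Y ω' - (P[Y | MeasurableSpace.comap XC inferInstance]) ω') ^ 2
      | MeasurableSpace.comap XC inferInstance]) ω ∂P := by
  rw [condIndepFun_iff_condIndep] at hYJ
  have h_condExp := condExp_sup_ae_eq_of_condIndep hY.comap_le hXJ.comap_le hYJ
    (comap_measurable Y).stronglyMeasurable (hY2.integrable one_le_two)
  have h_pair : MeasurableSpace.comap (fun ω ↦ (XC ω, XJ ω)) inferInstance
      = MeasurableSpace.comap XC inferInstance ⊔ MeasurableSpace.comap XJ inferInstance :=
    comap_prodMk XC XJ
  rw [h_pair, integral_condExp (sup_le hXC.comap_le hXJ.comap_le),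
    integral_condExp hXC.comap_le]
  refine integral_congr_ae ?_
  filter_upwards [h_condExp] with ω hω
  rw [hω]

/-- Expected-conditional-variance identity under conditional independence: if `Y ⫫ X_J | X_C`,
then `E[Var(Y | σ(X_C, X_J))] = E[Var(Y | σ(X_C))]`, where
`Var(Y | m) := E[(Y − E[Y | m])² | m]`. -/
theorem dedact_expected_conditional_variance
    {Ω : Type*} [MeasurableSpace Ω] [StandardBorelSpace Ω] [Nonempty Ω]
    (P : Measure Ω) [IsProbabilityMeasure P]
    {EC EJ : Type*} [MeasurableSpace EC] [MeasurableSpace EJ]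
    (Y : Ω → ℝ) (XC : Ω → EC) (XJ : Ω → EJ)
    (hY : Measurable Y) (hY2 : MemLp Y 2 P)
    (hXC : Measurable XC) (hXJ : Measurable XJ)
    (hYJ : CondIndepFun (MeasurableSpace.comap XC inferInstance) hXC.comap_le Y XJ P) :
    (∫ ω, (P[fun ω' =>
        (Y ω' - (P[Y | MeasurableSpace.comap (fun ω'' => (XC ω'', XJ ω'')) inferInstance]) ω') ^ 2
      | MeasurableSpace.comap (fun ω'' => (XC ω'', XJ ω'')) inferInstance]) ω ∂P)
    = ∫ ω, (P[fun ω' =>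
        (Y ω' - (P[Y | MeasurableSpace.comap XC inferInstance]) ω') ^ 2
      | MeasurableSpace.comap XC inferInstance]) ω ∂P :=
  dedact_expected_conditional_variance_general P Y XC XJ hY hY2 hXC hXJ hYJ
end

section
/- Let (Ω, 𝔉, P) be a probability space, Y a square-integrable real-valued random variable, and X_C, X_J random variables with values in measurable spaces (with a standard Borel condition as required for conditional independence). If E[(Y − E[Y | σ(X_C)])²] ≠ E[(Y − E[Y | σ(X_C, X_J)])²], then Y is not conditionally independent of X_J given X_C. -/
/-!
Conditional independence of `Y` and `X_J` given `X_C` forces `E[Y | X_C, X_J] = E[Y | X_C]` a.s.,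
so the two mean squared errors coincide. The conditional expectations are compared through their
integrals over the π-system of sets `a ∩ b`, `a ∈ σ(X_C)`, `b ∈ σ(X_J)`. There the identity for
`Y` follows from `E[P(a ∩ b | X_C) | Y] = P(a ∩ b | Y)`, which only has to be checked on sets of
`σ(Y)`, where it is the defining factorisation `P(s ∩ b | X_C) = P(s | X_C) P(b | X_C)`; this
avoids approximating `Y` by simple functions.
-/

open MeasureTheory ProbabilityTheory Set MeasurableSpace

theorem IsPiSystem.image2_inter_s9 {α : Type*} {S T : Set (Set α)} (hS : IsPiSystem S)
    (hT : IsPiSystem T) : IsPiSystem (image2 (· ∩ ·) S T) := by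
  rintro _ ⟨a, ha, b, hb, rfl⟩ _ ⟨a', ha', b', hb', rfl⟩ hne
  rw [inter_inter_inter_comm] at hne ⊢
  exact mem_image2_of_mem (hS a ha a' ha' hne.left) (hT b hb b' hb' hne.right)

theorem MeasurableSpace.generateFrom_image2_inter {α : Type*} (m₁ m₂ : MeasurableSpace α) :
    generateFrom (image2 (· ∩ ·) {s | MeasurableSet[m₁] s} {t | MeasurableSet[m₂] t})
      = m₁ ⊔ m₂ := by
  refine le_antisymm (generateFrom_le ?_) (sup_le (fun s hs => ?_) (fun t ht => ?_))
  · rintro _ ⟨s, hs, t, ht, rfl⟩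
    exact (le_sup_left (a := m₁) (b := m₂) s hs).inter (le_sup_right (a := m₁) (b := m₂) t ht)
  · exact measurableSet_generateFrom ⟨s, hs, univ, MeasurableSet.univ, inter_univ s⟩
  · exact measurableSet_generateFrom ⟨univ, MeasurableSet.univ, t, ht, univ_inter t⟩

theorem setIntegral_eq_of_isPiSystem_s9 {α E : Type*} [NormedAddCommGroup E] [NormedSpace ℝ E]
    {m₀ m : MeasurableSpace α} {μ : Measure[m] α} {C : Set (Set α)} (hm₀ : m₀ ≤ m)
    (hgen : m₀ = generateFrom C) (hC : IsPiSystem C) (huniv : univ ∈ C)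
    {f g : α → E} (hf : Integrable f μ) (hg : Integrable g μ)
    (hfg : ∀ s ∈ C, ∫ x in s, f x ∂μ = ∫ x in s, g x ∂μ) {s : Set α}
    (hs : MeasurableSet[m₀] s) : ∫ x in s, f x ∂μ = ∫ x in s, g x ∂μ := by
  induction s, hs using MeasurableSpace.induction_on_inter hgen hC with
  | empty => simp
  | basic t ht => exact hfg t ht
  | compl t ht iht =>
    have h_univ := hfg univ huniv
    rw [setIntegral_univ, setIntegral_univ] at h_univ
    rw [setIntegral_compl (hm₀ t ht) hf, setIntegral_compl (hm₀ t ht) hg, iht, h_univ]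
  | iUnion t hdisj ht iht =>
    rw [integral_iUnion (fun i => hm₀ _ (ht i)) hdisj hf.integrableOn,
      integral_iUnion (fun i => hm₀ _ (ht i)) hdisj hg.integrableOn]
    exact tsum_congr iht

section CondExp

variable {Ω : Type*} {m mΩ : MeasurableSpace Ω} {μ : Measure Ω}

theorem integral_mul_condExp (hm : m ≤ mΩ) [SigmaFinite (μ.trim hm)] {g h : Ω → ℝ}
    (hg : StronglyMeasurable[m] g) (hh : Integrable h μ) (hgh : Integrable (g * h) μ) :
    ∫ ω, (g * μ[h | m]) ω ∂μ = ∫ ω, (g * h) ω ∂μ :=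
  (integral_congr_ae (condExp_mul_of_stronglyMeasurable_left hg hgh hh)).symm.trans
    (integral_condExp hm)

theorem ae_norm_condExp_indicator_le_one (s : Set Ω) : ∀ᵐ ω ∂μ, ‖(μ⟦s | m⟧) ω‖ ≤ 1 := by
  simp_rw [Real.norm_eq_abs]
  refine ae_bdd_abs_condExp_of_ae_bdd_abs (.of_forall fun ω => ?_)
  by_cases hω : ω ∈ s <;> simp [hω]

theorem norm_indicator_one_le_one (s : Set Ω) (ω : Ω) :
    ‖s.indicator (fun _ => (1 : ℝ)) ω‖ ≤ 1 := by
  by_cases hω : ω ∈ s <;> simp [hω]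

theorem integral_mul_condExp_indicator (hm : m ≤ mΩ) [IsFiniteMeasure μ] {f : Ω → ℝ}
    (hf : Integrable f μ) {s : Set Ω} (hs : MeasurableSet s) :
    ∫ ω, (f * μ⟦s | m⟧) ω ∂μ = ∫ ω, (μ[f | m] * s.indicator fun _ => (1 : ℝ)) ω ∂μ := by
  have hs_int : Integrable (s.indicator fun _ => (1 : ℝ)) μ := (integrable_const 1).indicator hs
  calc ∫ ω, (f * μ⟦s | m⟧) ω ∂μ = ∫ ω, (μ⟦s | m⟧ * f) ω ∂μ := by simp_rw [mul_comm]
    _ = ∫ ω, (μ⟦s | m⟧ * μ[f | m]) ω ∂μ :=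
      (integral_mul_condExp hm stronglyMeasurable_condExp hf
        (hf.bdd_mul integrable_condExp.aestronglyMeasurable
          (ae_norm_condExp_indicator_le_one s))).symm
    _ = ∫ ω, (μ[f | m] * μ⟦s | m⟧) ω ∂μ := by simp_rw [mul_comm]
    _ = ∫ ω, (μ[f | m] * s.indicator fun _ => (1 : ℝ)) ω ∂μ :=
      integral_mul_condExp hm stronglyMeasurable_condExp hs_int
        (integrable_condExp.mul_bdd hs_int.aestronglyMeasurable
          (.of_forall (norm_indicator_one_le_one s)))

theorem setIntegral_eq_integral_mul_indicator_one {s : Set Ω} (hs : MeasurableSet s)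
    (f : Ω → ℝ) :
    ∫ ω in s, f ω ∂μ = ∫ ω, (f * s.indicator fun _ => (1 : ℝ)) ω ∂μ := by
  rw [← integral_indicator hs]
  congr 1 with ω
  by_cases hω : ω ∈ s <;> simp [hω]

end CondExp

namespace ProbabilityTheory.CondIndep

variable {Ω : Type*} {m' m₁ m₂ mΩ : MeasurableSpace Ω} [StandardBorelSpace Ω]
  {μ : Measure Ω} [IsFiniteMeasure μ] {hm' : m' ≤ mΩ}

theorem setIntegral_condExp_indicator_inter (h : CondIndep m' m₁ m₂ hm' μ)
    (hm₁ : m₁ ≤ mΩ) (hm₂ : m₂ ≤ mΩ) {s a b : Set Ω} (hs : MeasurableSet[m₁] s)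
    (ha : MeasurableSet[m'] a) (hb : MeasurableSet[m₂] b) :
    ∫ ω in s, (μ⟦a ∩ b | m'⟧) ω ∂μ = ∫ ω in s, (a ∩ b).indicator (fun _ => (1 : ℝ)) ω ∂μ := by
  have hs_int : Integrable (s.indicator fun _ => (1 : ℝ)) μ :=
    (integrable_const 1).indicator (hm₁ s hs)
  have hsb_int : Integrable ((s ∩ b).indicator fun _ => (1 : ℝ)) μ :=
    (integrable_const 1).indicator ((hm₁ s hs).inter (hm₂ b hb))
  have h_factor := (condIndep_iff m' m₁ m₂ hm' hm₁ hm₂ μ).mp h s b hs hb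
  have h_pull_a : μ⟦a ∩ b | m'⟧ =ᵐ[μ] a.indicator (μ⟦b | m'⟧) := by
    rw [← indicator_indicator]
    exact condExp_indicator ((integrable_const 1).indicator (hm₂ b hb)) ha
  calc ∫ ω in s, (μ⟦a ∩ b | m'⟧) ω ∂μ
      = ∫ ω, (μ⟦a ∩ b | m'⟧ * s.indicator fun _ => (1 : ℝ)) ω ∂μ :=
        setIntegral_eq_integral_mul_indicator_one (hm₁ s hs) _
    _ = ∫ ω, (μ⟦a ∩ b | m'⟧ * μ⟦s | m'⟧) ω ∂μ :=
        (integral_mul_condExp hm' stronglyMeasurable_condExp hs_int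
          (hs_int.bdd_mul integrable_condExp.aestronglyMeasurable
            (ae_norm_condExp_indicator_le_one _))).symm
    _ = ∫ ω, a.indicator (μ⟦s ∩ b | m'⟧) ω ∂μ := by
        refine integral_congr_ae ?_
        filter_upwards [h_pull_a, h_factor] with ω h_a h_sb
        by_cases hω : ω ∈ a <;> simp [h_a, h_sb, hω, mul_comm]
    _ = ∫ ω in a, ((s ∩ b).indicator fun _ => (1 : ℝ)) ω ∂μ := by
        rw [integral_indicator (hm' a ha), setIntegral_condExp hm' hsb_int ha]
    _ = ∫ ω in s, (a ∩ b).indicator (fun _ => (1 : ℝ)) ω ∂μ := by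
        rw [← integral_indicator (hm' a ha), ← integral_indicator (hm₁ s hs),
          indicator_indicator, indicator_indicator, ← inter_assoc, ← inter_assoc, inter_comm a s]

theorem condExp_condExp_indicator_inter (h : CondIndep m' m₁ m₂ hm' μ)
    (hm₁ : m₁ ≤ mΩ) (hm₂ : m₂ ≤ mΩ) {a b : Set Ω} (ha : MeasurableSet[m'] a)
    (hb : MeasurableSet[m₂] b) :
    μ[μ⟦a ∩ b | m'⟧ | m₁] =ᵐ[μ] μ⟦a ∩ b | m₁⟧ :=
  ae_eq_condExp_of_forall_setIntegral_eq hm₁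
    ((integrable_const 1).indicator ((hm' a ha).inter (hm₂ b hb)))
    (fun _ _ _ => integrable_condExp.integrableOn)
    (fun s hs _ => by
      rw [setIntegral_condExp hm₁ integrable_condExp hs,
        h.setIntegral_condExp_indicator_inter hm₁ hm₂ hs ha hb])
    stronglyMeasurable_condExp.aestronglyMeasurable

theorem setIntegral_condExp_inter (h : CondIndep m' m₁ m₂ hm' μ)
    (hm₁ : m₁ ≤ mΩ) (hm₂ : m₂ ≤ mΩ) {f : Ω → ℝ} (hf : StronglyMeasurable[m₁] f)
    (hf_int : Integrable f μ) {a b : Set Ω} (ha : MeasurableSet[m'] a)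
    (hb : MeasurableSet[m₂] b) :
    ∫ ω in a ∩ b, (μ[f | m']) ω ∂μ = ∫ ω in a ∩ b, f ω ∂μ := by
  have hab : MeasurableSet (a ∩ b) := (hm' a ha).inter (hm₂ b hb)
  have hab_int : Integrable ((a ∩ b).indicator fun _ => (1 : ℝ)) μ :=
    (integrable_const 1).indicator hab
  calc ∫ ω in a ∩ b, (μ[f | m']) ω ∂μ
      = ∫ ω, (μ[f | m'] * (a ∩ b).indicator fun _ => (1 : ℝ)) ω ∂μ :=
        setIntegral_eq_integral_mul_indicator_one hab _
    _ = ∫ ω, (f * μ⟦a ∩ b | m'⟧) ω ∂μ := (integral_mul_condExp_indicator hm' hf_int hab).symm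
    _ = ∫ ω, (f * μ[μ⟦a ∩ b | m'⟧ | m₁]) ω ∂μ :=
        (integral_mul_condExp hm₁ hf integrable_condExp
          (hf_int.mul_bdd integrable_condExp.aestronglyMeasurable
            (ae_norm_condExp_indicator_le_one _))).symm
    _ = ∫ ω, (f * μ⟦a ∩ b | m₁⟧) ω ∂μ := by
        refine integral_congr_ae ?_
        filter_upwards [h.condExp_condExp_indicator_inter hm₁ hm₂ ha hb] with ω hω
        simp only [Pi.mul_apply, hω]
    _ = ∫ ω, (f * (a ∩ b).indicator fun _ => (1 : ℝ)) ω ∂μ :=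
        integral_mul_condExp hm₁ hf hab_int
          (hf_int.mul_bdd hab_int.aestronglyMeasurable
            (.of_forall (norm_indicator_one_le_one _)))
    _ = ∫ ω in a ∩ b, f ω ∂μ := (setIntegral_eq_integral_mul_indicator_one hab _).symm

theorem condExp_sup_ae_eq (h : CondIndep m' m₁ m₂ hm' μ)
    (hm₁ : m₁ ≤ mΩ) (hm₂ : m₂ ≤ mΩ) {f : Ω → ℝ} (hf : StronglyMeasurable[m₁] f)
    (hf_int : Integrable f μ) :
    μ[f | m' ⊔ m₂] =ᵐ[μ] μ[f | m'] := by
  have hle : m' ⊔ m₂ ≤ mΩ := sup_le hm' hm₂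
  refine (ae_eq_condExp_of_forall_setIntegral_eq hle hf_int
    (fun _ _ _ => integrable_condExp.integrableOn) (fun s hs _ => ?_)
    (stronglyMeasurable_condExp.mono (le_sup_left : m' ≤ m' ⊔ m₂)).aestronglyMeasurable).symm
  refine setIntegral_eq_of_isPiSystem_s9 hle (generateFrom_image2_inter m' m₂).symm
    ((@isPiSystem_measurableSet Ω m').image2_inter_s9 (@isPiSystem_measurableSet Ω m₂))
    ⟨univ, .univ, univ, .univ, inter_self _⟩ integrable_condExp hf_int ?_ hs
  rintro _ ⟨a, ha, b, hb, rfl⟩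
  exact h.setIntegral_condExp_inter hm₁ hm₂ hf hf_int ha hb

end ProbabilityTheory.CondIndep

theorem dedact_mse_associative_sensitivity_general
    {Ω : Type*} [MeasurableSpace Ω] [StandardBorelSpace Ω]
    (P : Measure Ω) [IsProbabilityMeasure P]
    {EC EJ : Type*} [MeasurableSpace EC] [MeasurableSpace EJ]
    (Y : Ω → ℝ) (XC : Ω → EC) (XJ : Ω → EJ)
    (hY : Measurable Y) (hY2 : MemLp Y 2 P)
    (hXC : Measurable XC) (hXJ : Measurable XJ)
    (hne : (∫ ω, (Y ω - (P[Y | MeasurableSpace.comap XC inferInstance]) ω) ^ 2 ∂P)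
      ≠ ∫ ω, (Y ω -
          (P[Y | MeasurableSpace.comap (fun ω' => (XC ω', XJ ω')) inferInstance]) ω) ^ 2 ∂P) :
    ¬ CondIndepFun (MeasurableSpace.comap XC inferInstance) hXC.comap_le Y XJ P := by
  intro h_indep
  have h_condExp := ((condIndepFun_iff_condIndep _ _ _ _ _).mp h_indep).condExp_sup_ae_eq
    hY.comap_le hXJ.comap_le (comap_measurable Y).stronglyMeasurable (hY2.integrable one_le_two)
  rw [← MeasurableSpace.comap_prodMk] at h_condExp
  refine hne (integral_congr_ae ?_)
  filter_upwards [h_condExp] with ω hω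
  exact congrArg (fun c => (Y ω - c) ^ 2) hω.symm

/-- Associative Sensitivity of AI for the loss-optimal predictor under mean squared error:
if `E[(Y − E[Y|σ(X_C)])²] ≠ E[(Y − E[Y|σ(X_C, X_J)])²]`, then `Y` is not conditionally
independent of `X_J` given `X_C`. -/
theorem dedact_mse_associative_sensitivity
    {Ω : Type*} [MeasurableSpace Ω] [StandardBorelSpace Ω] [Nonempty Ω]
    (P : Measure Ω) [IsProbabilityMeasure P]
    {EC EJ : Type*} [MeasurableSpace EC] [MeasurableSpace EJ]
    (Y : Ω → ℝ) (XC : Ω → EC) (XJ : Ω → EJ)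
    (hY : Measurable Y) (hY2 : MemLp Y 2 P)
    (hXC : Measurable XC) (hXJ : Measurable XJ)
    (hne : (∫ ω, (Y ω - (P[Y | MeasurableSpace.comap XC inferInstance]) ω) ^ 2 ∂P)
      ≠ ∫ ω, (Y ω -
          (P[Y | MeasurableSpace.comap (fun ω' => (XC ω', XJ ω')) inferInstance]) ω) ^ 2 ∂P) :
    ¬ CondIndepFun (MeasurableSpace.comap XC inferInstance) hXC.comap_le Y XJ P :=
  dedact_mse_associative_sensitivity_general P Y XC XJ hY hY2 hXC hXJ hne
end

section
/- Let D be a finite set with d = |D| ≥ 1 elements and v : Finset D → ℝ a value function, with Shapley value φ_i(v) = (1/d) · Σ_{S ⊆ D∖{i}} C(d−1, |S|)⁻¹ · (v(S ∪ {i}) − v(S)). If i, k ∈ D are distinct players such that v(S ∪ {i}) = v(S ∪ {k}) for every subset S ⊆ D∖{i, k}, then φ_i(v) = φ_k(v). -/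
open Finset

/-- The Shapley value of player `i` for the value function `v`:
`φ_i(v) = (1/d) Σ_{S ⊆ D∖{i}} C(d−1, |S|)⁻¹ (v(S ∪ {i}) − v(S))`. -/
noncomputable def shapleyValue {D : Type*} [Fintype D] [DecidableEq D]
    (v : Finset D → ℝ) (i : D) : ℝ :=
  (1 / (Fintype.card D : ℝ)) *
    ∑ S ∈ (Finset.univ.erase i).powerset,
      ((Fintype.card D - 1).choose S.card : ℝ)⁻¹ * (v (insert i S) - v S)

private lemma image_swap_no {D : Type*} [DecidableEq D] {i k : D} {S : Finset D}
    (hi : i ∉ S) (hk : k ∉ S) : S.image (Equiv.swap i k) = S := by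
  have : S.image (Equiv.swap i k) = S.image id := by
    apply Finset.image_congr
    intro x hx
    exact Equiv.swap_apply_of_ne_of_ne (fun h => hi (h ▸ hx)) (fun h => hk (h ▸ hx))
  rw [this, Finset.image_id]

private lemma key {D : Type*} [DecidableEq D] {i k : D} (hik : i ≠ k)
    (v : Finset D → ℝ)
    (h : ∀ S : Finset D, i ∉ S → k ∉ S → v (insert i S) = v (insert k S))
    (S : Finset D) (hiS : i ∉ S) :
    v (insert k (S.image (Equiv.swap i k))) - v (S.image (Equiv.swap i k))
      = v (insert i S) - v S := by
  by_cases hkS : k ∈ S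
  · set T := S.erase k with hT
    have hiT : i ∉ T := fun hx => hiS (Finset.mem_of_mem_erase hx)
    have hkT : k ∉ T := Finset.notMem_erase _ _
    have hS : S = insert k T := (Finset.insert_erase hkS).symm
    have himg : S.image (Equiv.swap i k) = insert i T := by
      rw [hS, Finset.image_insert, Equiv.swap_apply_right, image_swap_no hiT hkT]
    rw [himg, hS]
    have h1 : insert k (insert i T) = insert i (insert k T) := Finset.insert_comm _ _ _
    rw [h1, h T hiT hkT]
  · rw [image_swap_no hiS hkS, h S hiS hkS]

/-- Symmetry axiom of Shapley values: two players with identical contributions to every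
coalition not containing either of them receive the same attribution. -/
theorem shapley_symmetry {D : Type*} [Fintype D] [DecidableEq D]
    (hd : 1 ≤ Fintype.card D) (v : Finset D → ℝ) (i k : D) (hik : i ≠ k)
    (h : ∀ S : Finset D, i ∉ S → k ∉ S → v (insert i S) = v (insert k S)) :
    shapleyValue v i = shapleyValue v k := by
  unfold shapleyValue
  congr 1
  have hinj := (Equiv.swap i k).injective
  apply Finset.sum_nbij' (fun S => S.image (Equiv.swap i k)) (fun S => S.image (Equiv.swap i k))
  · intro S hS
    rw [Finset.mem_powerset] at hS ⊢
    intro x hx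
    rw [Finset.mem_image] at hx
    obtain ⟨y, hy, rfl⟩ := hx
    have hyi : y ≠ i := fun hyi => (Finset.mem_erase.mp (hS hy)).1 (hyi ▸ rfl)
    rw [Finset.mem_erase]
    constructor
    · intro hc
      rcases eq_or_ne y k with rfl | hyk
      · rw [Equiv.swap_apply_right] at hc; exact hik hc
      · rw [Equiv.swap_apply_of_ne_of_ne hyi hyk] at hc; exact hyk hc
    · exact Finset.mem_univ _
  · intro S hS
    rw [Finset.mem_powerset] at hS ⊢
    intro x hx
    rw [Finset.mem_image] at hx
    obtain ⟨y, hy, rfl⟩ := hx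
    have hyk : y ≠ k := fun hyk => (Finset.mem_erase.mp (hS hy)).1 (hyk ▸ rfl)
    rw [Finset.mem_erase]
    constructor
    · intro hc
      rcases eq_or_ne y i with rfl | hyi
      · rw [Equiv.swap_apply_left] at hc; exact hik hc.symm
      · rw [Equiv.swap_apply_of_ne_of_ne hyi hyk] at hc; exact hyi hc
    · exact Finset.mem_univ _
  · intro S _
    rw [Finset.image_image]
    have : (Equiv.swap i k) ∘ (Equiv.swap i k) = id := by
      funext x; simp
    rw [this, Finset.image_id]
  · intro S _
    rw [Finset.image_image]
    have : (Equiv.swap i k) ∘ (Equiv.swap i k) = id := by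
      funext x; simp
    rw [this, Finset.image_id]
  · intro S hS
    have hiS : i ∉ S := fun hx =>
      (Finset.mem_erase.mp (Finset.mem_powerset.mp hS hx)).1 rfl
    rw [Finset.card_image_of_injective _ hinj, key hik v h S hiS]
end
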